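/- arXiv:math/0111143 — 3 statements merged into one kernel-verified Lean document; each statement's English description precedes it below -/
import Mathlib

section
/- Let $k_1, C > 0$, $\epsilon > 0$, and let $y : [0,\infty) \to \mathbb{R}$ be the solution of the ODE $\dot y = -k_1 y^{1+\epsilon} + C$ with $y(0) = y_0 \ge 0$. Then for all $t \ge 1$, $y(t) \le \max\left( (2C/k_1)^{1+\epsilon}, (2/(k_1\epsilon) + 2)^{1/\epsilon} \right)$, uniformly in the initial condition $y_0$. -/
open Real

theorem ode_uniform_bound
    (k1 C ε : ℝ) (hk1 : 0 < k1) (hC : 0 < C) (hε : 0 < ε)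
    (y : ℝ → ℝ) (y0 : ℝ) (hy0 : 0 ≤ y0) (h0 : y 0 = y0)
    (hode : ∀ t, 0 ≤ t → HasDerivAt y (-k1 * y t ^ (1 + ε) + C) t) :
    ∀ t, 1 ≤ t →
      y t ≤ max ((2 * C / k1) ^ (1 + ε)) ((2 / (k1 * ε) + 2) ^ (1 / ε)) := by
  set A : ℝ := (2 * C / k1) ^ (1 + ε) with hA
  set B : ℝ := (2 / (k1 * ε) + 2) ^ (1 / ε) with hB
  set M : ℝ := max A B with hM
  have h1ε : (0:ℝ) < 1 + ε := by linarith
  have hbase : (0:ℝ) < 2 / (k1 * ε) + 2 := by positivity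
  have hBpos : 0 < B := Real.rpow_pos_of_pos hbase _
  have hMpos : 0 < M := lt_of_lt_of_le hBpos (le_max_right _ _)
  have hx0 : (0:ℝ) ≤ 2 * C / k1 := by positivity
  -- key: M ^ (1+ε) ≥ 2C/k1
  have hTM : (2 * C / k1) ^ (1 / (1 + ε)) ≤ M := by
    rcases le_total (2 * C / k1) 1 with h | h
    · have hT1 : (2 * C / k1) ^ (1 / (1 + ε)) ≤ 1 :=
        Real.rpow_le_one hx0 h (by positivity)
      have h1B : (1:ℝ) ≤ B := Real.one_le_rpow
        (by linarith [show (0:ℝ) ≤ 2 / (k1 * ε) from by positivity]) (by positivity)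
      exact hT1.trans (h1B.trans (le_max_right _ _))
    · have : (2 * C / k1) ^ (1 / (1 + ε)) ≤ (2 * C / k1) ^ (1 + ε) := by
        apply Real.rpow_le_rpow_of_exponent_le h
        have : 1 / (1 + ε) ≤ 1 := by
          rw [div_le_one h1ε]; linarith
        linarith
      exact this.trans (le_max_left _ _)
  have hM2C : 2 * C / k1 ≤ M ^ (1 + ε) := by
    have := Real.rpow_le_rpow (by positivity) hTM h1ε.le
    rwa [← Real.rpow_mul hx0, one_div_mul_cancel h1ε.ne', Real.rpow_one] at this
  -- continuity of y on [0, ∞)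
  have hcont : ContinuousOn y (Set.Ici 0) := fun x hx =>
    ((hode x hx).continuousAt).continuousWithinAt
  -- derivative is negative whenever y > M
  have hderivneg : ∀ x, 0 ≤ x → M < y x → deriv y x < 0 := by
    intro x hx hMx
    rw [(hode x hx).deriv]
    have h1 : M ^ (1 + ε) ≤ y x ^ (1 + ε) :=
      Real.rpow_le_rpow hMpos.le hMx.le h1ε.le
    have h2 : k1 * (2 * C / k1) = 2 * C := by field_simp
    nlinarith [mul_le_mul_of_nonneg_left h1 hk1.le,
      mul_le_mul_of_nonneg_left hM2C hk1.le]
  -- there exists s ∈ [0,1] with y s ≤ M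
  have hex : ∃ s ∈ Set.Icc (0:ℝ) 1, y s ≤ M := by
    by_contra hcon
    push_neg at hcon
    have hypos : ∀ x ∈ Set.Icc (0:ℝ) 1, 0 < y x := fun x hx =>
      lt_trans hMpos (hcon x hx)
    set c : ℝ := ε * k1 / 2 with hc
    have hcpos : 0 < c := by positivity
    set w : ℝ → ℝ := fun t => y t ^ (-ε) with hw
    have hw' : ∀ x ∈ Set.Ioo (0:ℝ) 1,
        HasDerivAt w ((-k1 * y x ^ (1 + ε) + C) * (-ε) * y x ^ (-ε - 1)) x := by
      intro x hx
      exact HasDerivAt.rpow_const (hode x hx.1.le)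
        (Or.inl (hypos x ⟨hx.1.le, hx.2.le⟩).ne')
    have hge : ∀ x ∈ Set.Ioo (0:ℝ) 1,
        c ≤ (-k1 * y x ^ (1 + ε) + C) * (-ε) * y x ^ (-ε - 1) := by
      intro x hx
      have hu : 0 < y x := hypos x ⟨hx.1.le, hx.2.le⟩
      have hP : 0 < y x ^ (1 + ε) := Real.rpow_pos_of_pos hu _
      have hPM : M ^ (1 + ε) ≤ y x ^ (1 + ε) :=
        Real.rpow_le_rpow hMpos.le (hcon x ⟨hx.1.le, hx.2.le⟩).le h1ε.le
      have h2C : 2 * C ≤ k1 * y x ^ (1 + ε) := by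
        have := hM2C.trans hPM
        rw [div_le_iff₀ hk1] at this
        linarith [this]
      have hinv : y x ^ (-ε - 1) = (y x ^ (1 + ε))⁻¹ := by
        rw [show -ε - 1 = -(1 + ε) by ring, Real.rpow_neg hu.le]
      rw [hinv]
      have e1 : (-k1 * y x ^ (1 + ε) + C) * (-ε) * (y x ^ (1 + ε))⁻¹
          = ε * k1 - ε * (C * (y x ^ (1 + ε))⁻¹) := by
        field_simp
        ring
      rw [e1]
      have h3 : C * (y x ^ (1 + ε))⁻¹ ≤ k1 / 2 := by
        rw [← div_eq_mul_inv, div_le_iff₀ hP]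
        nlinarith
      have h4 : ε * (C * (y x ^ (1 + ε))⁻¹) ≤ ε * (k1 / 2) :=
        mul_le_mul_of_nonneg_left h3 hε.le
      rw [hc]
      linarith
    -- g = w - c * t is monotone on [0,1]
    set g : ℝ → ℝ := fun t => w t - c * t with hg
    have hgmono : MonotoneOn g (Set.Icc (0:ℝ) 1) := by
      have hgd : ∀ x ∈ Set.Ioo (0:ℝ) 1,
          HasDerivAt g ((-k1 * y x ^ (1 + ε) + C) * (-ε) * y x ^ (-ε - 1) - c) x := by
        intro x hx
        have h1 := (hw' x hx).sub
          (by simpa using (hasDerivAt_id x).const_mul c)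
        exact h1
      apply monotoneOn_of_deriv_nonneg (convex_Icc 0 1)
      · have hwc : ContinuousOn w (Set.Icc (0:ℝ) 1) := by
          apply ContinuousOn.rpow_const
          · exact hcont.mono (fun x hx => hx.1)
          · exact fun x hx => Or.inl (hypos x hx).ne'
        exact hwc.sub ((continuous_const.mul continuous_id).continuousOn)
      · intro x hx
        rw [interior_Icc] at hx
        exact (hgd x hx).differentiableAt.differentiableWithinAt
      · intro x hx
        rw [interior_Icc] at hx
        rw [(hgd x hx).deriv]
        linarith [hge x hx]
    have hg01 : g 0 ≤ g 1 :=
      hgmono (Set.left_mem_Icc.2 zero_le_one) (Set.right_mem_Icc.2 zero_le_one)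
        zero_le_one
    have hw0 : 0 ≤ w 0 := Real.rpow_nonneg (hypos 0 ⟨le_refl _, zero_le_one⟩).le _
    have hcw1 : c ≤ w 1 := by
      simp only [hg] at hg01
      simp at hg01
      linarith
    have hy1 : 0 < y 1 := hypos 1 ⟨zero_le_one, le_refl _⟩
    have hy1e : 0 < y 1 ^ ε := Real.rpow_pos_of_pos hy1 _
    have hwinv : w 1 = (y 1 ^ ε)⁻¹ := by
      rw [hw]
      simp only
      rw [Real.rpow_neg hy1.le]
    have hle : y 1 ^ ε ≤ c⁻¹ := by
      rw [hwinv] at hcw1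
      rw [← one_div, le_div_iff₀ hcpos]
      calc y 1 ^ ε * c ≤ y 1 ^ ε * (y 1 ^ ε)⁻¹ :=
            mul_le_mul_of_nonneg_left hcw1 hy1e.le
        _ = 1 := mul_inv_cancel₀ hy1e.ne'
    have hy1le : y 1 ≤ (c⁻¹) ^ (1 / ε) := by
      have h5 : (y 1 ^ ε) ^ (1 / ε) ≤ (c⁻¹) ^ (1 / ε) :=
        Real.rpow_le_rpow hy1e.le hle (by positivity)
      rwa [← Real.rpow_mul hy1.le, mul_one_div_cancel hε.ne', Real.rpow_one] at h5
    have hcinv : c⁻¹ = 2 / (k1 * ε) := by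
      rw [hc]; field_simp
    have hlt : (c⁻¹) ^ (1 / ε) < B := by
      rw [hcinv, hB]
      apply Real.rpow_lt_rpow (by positivity) (by linarith) (by positivity)
    have hMy1 : M < y 1 := hcon 1 ⟨zero_le_one, le_refl _⟩
    have : y 1 < M := lt_of_le_of_lt hy1le (lt_of_lt_of_le hlt (le_max_right _ _))
    linarith
  -- barrier invariance: once below M, stay below M
  obtain ⟨s, hs01, hys⟩ := hex
  intro t ht
  by_contra hyt
  push_neg at hyt
  have hst : s ≤ t := hs01.2.trans ht
  have hs0 : 0 ≤ s := hs01.1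
  set S : Set ℝ := Set.Icc s t ∩ y ⁻¹' Set.Iic M with hS
  have hSne : s ∈ S := ⟨Set.left_mem_Icc.2 hst, hys⟩
  have hSbdd : BddAbove S := (bddAbove_Icc).mono Set.inter_subset_left
  have hsub : Set.Icc s t ⊆ Set.Ici (0:ℝ) := fun x hx => hs0.trans hx.1
  have hSclosed : IsClosed S :=
    (hcont.mono hsub).preimage_isClosed_of_isClosed isClosed_Icc isClosed_Iic
  set u : ℝ := sSup S with hu
  have huS : u ∈ S := hSclosed.csSup_mem ⟨s, hSne⟩ hSbdd
  have huIcc : u ∈ Set.Icc s t := huS.1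
  have hyu : y u ≤ M := huS.2
  have hut : u < t := lt_of_le_of_ne huIcc.2 (by
    intro h
    rw [h] at hyu
    linarith)
  have hgt : ∀ r ∈ Set.Ioc u t, M < y r := by
    intro r hr
    by_contra h
    push_neg at h
    have hrS : r ∈ S := ⟨⟨huIcc.1.trans hr.1.le, hr.2⟩, h⟩
    have := le_csSup hSbdd hrS
    exact absurd this (not_le.2 hr.1)
  have hanti : StrictAntiOn y (Set.Icc u t) := by
    apply strictAntiOn_of_deriv_neg (convex_Icc u t)
    · exact hcont.mono (fun x hx => (hs0.trans huIcc.1).trans hx.1)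
    · intro x hx
      rw [interior_Icc] at hx
      exact hderivneg x ((hs0.trans huIcc.1).trans hx.1.le) (hgt x ⟨hx.1, hx.2.le⟩)
  have : y t < y u :=
    hanti (Set.left_mem_Icc.2 hut.le) (Set.right_mem_Icc.2 hut.le) hut
  linarith
end

section
/- Let $k_1, \epsilon > 0$, $C \ge 0$, and let $\phi : [0,\infty) \to [0,\infty)$ be continuous and satisfy $\phi(t) \le \phi(\tau) - k_1 \int_\tau^t \phi(u)^{1+\epsilon}\,du + C(t-\tau)$ for all $0 \le \tau \le t$. If $y$ solves $\dot y = -k_1 y^{1+\epsilon} + C$ with $y(0) = \phi(0)$, then $\phi(t) \le y(t)$ for all $t \ge 0$. -/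
open Real intervalIntegral

open Set in
/-- If a continuous-ish function is `≤ 0` at `0` and `> 0` at `b`, there is a last zero `s`
before `b` after which it is positive. -/
lemma exists_last_crossing (f : ℝ → ℝ) (b : ℝ) (hb : 0 ≤ b)
    (hcont : ∀ t ∈ Set.Icc (0:ℝ) b, ContinuousAt f t)
    (h0 : f 0 ≤ 0) (hb' : 0 < f b) :
    ∃ s, s ∈ Set.Ico 0 b ∧ f s = 0 ∧ ∀ u ∈ Set.Ioc s b, 0 < f u := by
  set S := {t | t ∈ Set.Icc (0:ℝ) b ∧ f t ≤ 0} with hSdef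
  have h0S : (0:ℝ) ∈ S := ⟨⟨le_refl 0, hb⟩, h0⟩
  have hSne : S.Nonempty := ⟨0, h0S⟩
  have hsub : S ⊆ Set.Icc 0 b := fun x hx => hx.1
  have hconOn : ContinuousOn f (Set.Icc 0 b) := fun x hx => (hcont x hx).continuousWithinAt
  have hclosed : IsClosed S := by
    exact hconOn.preimage_isClosed_of_isClosed isClosed_Icc (isClosed_Iic (a := (0:ℝ)))
  have hScomp : IsCompact S := isCompact_Icc.of_isClosed_subset hclosed hsub
  set s := sSup S with hs_def
  have hsS : s ∈ S := hScomp.sSup_mem hSne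
  have hs0 : 0 ≤ s := hsS.1.1
  have hsleb : s ≤ b := hsS.1.2
  have hsltb : s < b := lt_of_le_of_ne hsleb (by
    intro h; rw [h] at hsS; exact absurd hsS.2 (not_le.mpr hb'))
  have hpos : ∀ u ∈ Set.Ioc s b, 0 < f u := by
    intro u hu
    by_contra h
    push_neg at h
    have huS : u ∈ S := ⟨⟨hs0.trans hu.1.le, hu.2⟩, h⟩
    exact absurd (le_csSup (hScomp.bddAbove) huS) (not_le.mpr hu.1)
  refine ⟨s, ⟨hs0, hsltb⟩, ?_, hpos⟩
  rcases lt_or_eq_of_le hsS.2 with hlt | heq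
  · exfalso
    have hca : ContinuousAt f s := hcont s hsS.1
    have hev : ∀ᶠ t in nhds s, f t < 0 := hca.eventually_lt continuousAt_const hlt
    have hev' : ∀ᶠ t in nhdsWithin s (Set.Ioi s), f t < 0 ∧ t ∈ Set.Ioo s b := by
      refine Filter.Eventually.and (hev.filter_mono nhdsWithin_le_nhds) ?_
      exact eventually_mem_nhdsWithin.mp (Filter.eventually_of_mem
        (Ioo_mem_nhdsGT_of_mem ⟨le_refl s, hsltb⟩) fun x hx _ => hx)
    obtain ⟨u, hu1, hu2⟩ := hev'.exists
    exact absurd (hpos u ⟨hu2.1, hu2.2.le⟩) (not_lt.mpr hu1.le)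
  · exact heq

theorem comparison_theorem
    (k1 C ε : ℝ) (hk1 : 0 < k1) (hε : 0 < ε) (hC : 0 ≤ C)
    (φ : ℝ → ℝ) (hφcont : Continuous φ) (hφnn : ∀ t, 0 ≤ t → 0 ≤ φ t)
    (hineq : ∀ τ t, 0 ≤ τ → τ ≤ t →
      φ t ≤ φ τ - k1 * (∫ u in τ..t, φ u ^ (1 + ε)) + C * (t - τ))
    (y : ℝ → ℝ) (hy0 : y 0 = φ 0)
    (hode : ∀ t, 0 ≤ t → HasDerivAt y (-k1 * y t ^ (1 + ε) + C) t) :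
    ∀ t, 0 ≤ t → φ t ≤ y t := by
  have hεle : (0:ℝ) ≤ 1 + ε := by linarith
  have hyc : ∀ t, 0 ≤ t → ContinuousAt y t := fun t ht => (hode t ht).continuousAt
  -- Step 1: y is nonnegative on [0, ∞)
  have hynn : ∀ t, 0 ≤ t → 0 ≤ y t := by
    intro t1 ht1
    by_contra hneg
    push_neg at hneg
    obtain ⟨s, hs, hfs, hfpos⟩ := exists_last_crossing (fun u => -y u) t1 ht1
      (fun u hu => (hyc u hu.1).neg)
      (by simp only [neg_nonpos]; rw [hy0]; exact hφnn 0 le_rfl)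
      (by simpa using neg_pos.mpr hneg)
    have hs0 : 0 ≤ s := hs.1
    have hst : s < t1 := hs.2
    have hys : y s = 0 := by linarith [hfs]
    -- max of -y on [s, t1]
    obtain ⟨m, hm_mem, hm⟩ := isCompact_Icc.exists_isMaxOn (Set.nonempty_Icc.mpr hst.le)
      ((continuousOn_of_forall_continuousAt
        (fun u (hu : u ∈ Set.Icc s t1) => hyc u (hs0.trans hu.1))).neg)
    set M := -y m with hMdef
    have hMbound : ∀ u ∈ Set.Icc s t1, -y u ≤ M := fun u hu => hm hu
    have hMpos : 0 < M :=
      lt_of_lt_of_le (by linarith : (0:ℝ) < -y t1) (hMbound t1 ⟨hst.le, le_rfl⟩)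
    set L := k1 * M ^ ε with hLdef
    set h : ℝ → ℝ := fun u => (-y u) * Real.exp (-L * u) with hhdef
    have hyle : ∀ u ∈ Set.Icc s t1, y u ≤ 0 := by
      intro u hu
      rcases eq_or_lt_of_le hu.1 with heq | hlt
      · rw [← heq]; exact hys.le
      · have := hfpos u ⟨hlt, hu.2⟩; linarith
    have hderiv : ∀ u ∈ Set.Icc s t1,
        HasDerivAt h ((k1 * y u ^ (1+ε) - C) * Real.exp (-L*u)
          + (-y u) * (-L * Real.exp (-L*u))) u := by
      intro u hu
      have h1 : HasDerivAt (fun v => -y v) (k1 * y u ^ (1+ε) - C) u := by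
        have := (hode u (hs0.trans hu.1)).neg
        rw [show k1 * y u ^ (1+ε) - C = -(-k1 * y u ^ (1+ε) + C) by ring]; exact this
      have h2 : HasDerivAt (fun v => Real.exp (-L * v)) (-L * Real.exp (-L * u)) u := by
        have hbase : HasDerivAt (fun v : ℝ => -L * v) (-L) u := by
          simpa using (hasDerivAt_id u).const_mul (-L)
        simpa [mul_comm] using hbase.exp
      exact h1.mul h2
    have hkey : ∀ u ∈ Set.Icc s t1, k1 * y u ^ (1+ε) ≤ L * (-y u) := by
      intro u hu
      rcases eq_or_lt_of_le (hyle u hu) with heq | hlt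
      · rw [heq, Real.zero_rpow (by positivity)]
        simp
      · have habs : |y u| = -y u := abs_of_neg hlt
        have h1 : y u ^ (1+ε) ≤ |y u| ^ (1+ε) :=
          (le_abs_self _).trans (Real.abs_rpow_le_abs_rpow _ _)
        have h2 : |y u| ^ (1+ε) = |y u| * |y u| ^ ε := by
          rw [Real.rpow_add (abs_pos.mpr hlt.ne), Real.rpow_one]
        have h3 : |y u| ^ ε ≤ M ^ ε := by
          apply Real.rpow_le_rpow (abs_nonneg _) _ hε.le
          rw [habs]; exact hMbound u hu
        have h4 : y u ^ (1+ε) ≤ M ^ ε * (-y u) := by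
          calc y u ^ (1+ε) ≤ |y u| * |y u| ^ ε := by rw [← h2]; exact h1
            _ ≤ |y u| * M ^ ε := by
                exact mul_le_mul_of_nonneg_left h3 (abs_nonneg _)
            _ = M ^ ε * (-y u) := by rw [habs]; ring
        calc k1 * y u ^ (1+ε) ≤ k1 * (M ^ ε * (-y u)) :=
              mul_le_mul_of_nonneg_left h4 hk1.le
          _ = L * (-y u) := by rw [hLdef]; ring
    have hd_nonpos : ∀ u ∈ Set.Icc s t1,
        (k1 * y u ^ (1+ε) - C) * Real.exp (-L*u) + (-y u) * (-L * Real.exp (-L*u)) ≤ 0 := by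
      intro u hu
      have he : (0:ℝ) < Real.exp (-L*u) := Real.exp_pos _
      have : (k1 * y u ^ (1+ε) - C) * Real.exp (-L*u) + (-y u) * (-L * Real.exp (-L*u))
          = (k1 * y u ^ (1+ε) - C - L * (-y u)) * Real.exp (-L*u) := by ring
      rw [this]
      apply mul_nonpos_of_nonpos_of_nonneg _ he.le
      have := hkey u hu
      linarith
    have hanti : AntitoneOn h (Set.Icc s t1) := by
      apply antitoneOn_of_deriv_nonpos (convex_Icc s t1)
      · exact fun u hu => ((hderiv u hu).continuousAt).continuousWithinAt
      · intro u hu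
        rw [interior_Icc] at hu
        exact ((hderiv u (Set.Ioo_subset_Icc_self hu)).differentiableAt).differentiableWithinAt
      · intro u hu
        rw [interior_Icc] at hu
        rw [(hderiv u (Set.Ioo_subset_Icc_self hu)).deriv]
        exact hd_nonpos u (Set.Ioo_subset_Icc_self hu)
    have hle : h t1 ≤ h s := hanti ⟨le_rfl, hst.le⟩ ⟨hst.le, le_rfl⟩ hst.le
    have hhs : h s = 0 := by simp [hhdef, hys]
    have hht1 : 0 < h t1 := by
      apply mul_pos (by linarith : (0:ℝ) < -y t1) (Real.exp_pos _)
    linarith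
  -- Step 2: comparison
  intro t0 ht0
  by_contra hcon
  push_neg at hcon
  obtain ⟨s, hs, hfs, hfpos⟩ := exists_last_crossing (fun u => φ u - y u) t0 ht0
    (fun u hu => (hφcont.continuousAt).sub (hyc u hu.1))
    (by simp [hy0])
    (by simpa using sub_pos.mpr hcon)
  have hs0 : 0 ≤ s := hs.1
  have hst : s < t0 := hs.2
  have hφys : φ s = y s := by linarith [hfs]
  have hyco : ContinuousOn y (Set.Icc s t0) :=
    continuousOn_of_forall_continuousAt fun u hu => hyc u (hs0.trans hu.1)
  have hyrpow : ContinuousOn (fun u => y u ^ (1+ε)) (Set.Icc s t0) :=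
    hyco.rpow_const fun x _ => Or.inr hεle
  have huIcc : Set.uIcc s t0 = Set.Icc s t0 := Set.uIcc_of_le hst.le
  have hint_y : IntervalIntegrable (fun u => y u ^ (1+ε)) MeasureTheory.volume s t0 := by
    apply ContinuousOn.intervalIntegrable
    rwa [huIcc]
  have hint_φ : IntervalIntegrable (fun u => φ u ^ (1+ε)) MeasureTheory.volume s t0 :=
    ((hφcont.continuousOn).rpow_const fun x _ => Or.inr hεle).intervalIntegrable
  have hint_rhs : IntervalIntegrable (fun u => -k1 * y u ^ (1+ε) + C) MeasureTheory.volume s t0 := by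
    apply ContinuousOn.intervalIntegrable
    rw [huIcc]
    exact (hyrpow.const_smul (-k1)).add continuousOn_const
  have hyint : ∫ u in s..t0, (-k1 * y u ^ (1+ε) + C) = y t0 - y s := by
    apply intervalIntegral.integral_eq_sub_of_hasDerivAt
    · intro u hu
      rw [huIcc] at hu
      exact hode u (hs0.trans hu.1)
    · exact hint_rhs
  have hsplit : ∫ u in s..t0, (-k1 * y u ^ (1+ε) + C)
      = -k1 * (∫ u in s..t0, y u ^ (1+ε)) + C * (t0 - s) := by
    rw [intervalIntegral.integral_add (hint_y.const_mul (-k1)) intervalIntegrable_const,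
      intervalIntegral.integral_const_mul, intervalIntegral.integral_const]
    simp [smul_eq_mul]
    ring
  have hptwise : ∀ u ∈ Set.Icc s t0, y u ^ (1+ε) ≤ φ u ^ (1+ε) := by
    intro u hu
    have hu0 : 0 ≤ u := hs0.trans hu.1
    have hle : y u ≤ φ u := by
      rcases eq_or_lt_of_le hu.1 with heq | hlt
      · rw [← heq]; exact hφys.ge
      · have := hfpos u ⟨hlt, hu.2⟩; linarith
    exact Real.rpow_le_rpow (hynn u hu0) hle hεle
  have hmono : (∫ u in s..t0, y u ^ (1+ε)) ≤ ∫ u in s..t0, φ u ^ (1+ε) :=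
    intervalIntegral.integral_mono_on hst.le hint_y hint_φ hptwise
  have hφineq := hineq s t0 hs0 hst.le
  have hyeq : y t0 = φ s - k1 * (∫ u in s..t0, y u ^ (1+ε)) + C * (t0 - s) := by
    rw [hφys]
    have := hsplit.symm.trans hyint
    linarith
  have : k1 * (∫ u in s..t0, y u ^ (1+ε)) ≤ k1 * ∫ u in s..t0, φ u ^ (1+ε) :=
    mul_le_mul_of_nonneg_left hmono hk1.le
  linarith
end

section
/- Let $g : [0,\infty) \to [0,\infty)$ be continuous, $p \ge 1/2$, and suppose a nonnegative continuous function $v$ satisfies $v(t)^{2p} \le v(0)^{2p} + \int_0^t 2p\, v(u)^{2p-1} g(u)\,du$ for all $t \in [0,T]$. Then $v(t) \le v(0) + \int_0^t g(u)\,du$ for all $t \in [0,T]$. -/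
open Real intervalIntegral

theorem power_integral_inequality
    (g : ℝ → ℝ) (hg_cont : Continuous g) (hg_nn : ∀ t, 0 ≤ t → 0 ≤ g t)
    (p : ℝ) (hp : 1 / 2 ≤ p)
    (v : ℝ → ℝ) (hv_cont : Continuous v) (hv_nn : ∀ t, 0 ≤ t → 0 ≤ v t)
    (T : ℝ) (hT : 0 < T)
    (hineq : ∀ t, 0 ≤ t → t ≤ T →
      v t ^ (2 * p) ≤ v 0 ^ (2 * p) +
        ∫ u in (0 : ℝ)..t, 2 * p * v u ^ (2 * p - 1) * g u) :
    ∀ t, 0 ≤ t → t ≤ T → v t ≤ v 0 + ∫ u in (0 : ℝ)..t, g u := by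
  intro t ht htT
  have hq : (0:ℝ) ≤ 2 * p - 1 := by linarith
  have h2p : (1:ℝ) ≤ 2 * p := by linarith
  have h2ppos : (0:ℝ) < 2 * p := by linarith
  have hv0 : 0 ≤ v 0 := hv_nn 0 le_rfl
  have key : ∀ ε : ℝ, 0 < ε → v t ≤ v 0 + (∫ u in (0:ℝ)..t, g u) + ε * (1 + T) := by
    intro ε hε
    set z : ℝ → ℝ := fun s => v 0 + ε + (∫ u in (0:ℝ)..s, g u) + ε * s with hzdef
    have hzderiv : ∀ s : ℝ, HasDerivAt z (g s + ε) s := by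
      intro s
      have h1 : HasDerivAt (fun s => ∫ u in (0:ℝ)..s, g u) (g s) s :=
        (hg_cont.integral_hasStrictDerivAt 0 s).hasDerivAt
      have h2 : HasDerivAt (fun s : ℝ => ε * s) ε s := by
        simpa using (hasDerivAt_id s).const_mul ε
      exact (h1.const_add (v 0 + ε)).add h2
    have hzcont : Continuous z :=
      continuous_iff_continuousAt.2 fun s => (hzderiv s).continuousAt
    have hz0 : z 0 = v 0 + ε := by simp [hzdef]
    have hzFTC : ∀ s : ℝ, z s ^ (2*p) =
        (v 0 + ε) ^ (2*p) + ∫ u in (0:ℝ)..s, 2*p * z u ^ (2*p-1) * (g u + ε) := by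
      intro s
      have hderiv : ∀ x ∈ Set.uIcc (0:ℝ) s,
          HasDerivAt (fun y => z y ^ (2*p)) (2*p * z x ^ (2*p-1) * (g x + ε)) x := by
        intro x _
        have h1 : HasDerivAt (fun y : ℝ => y ^ (2*p)) (2*p * z x ^ (2*p-1)) (z x) :=
          Real.hasDerivAt_rpow_const (Or.inr h2p)
        have h2 := h1.comp x (hzderiv x)
        exact h2
      have hint : IntervalIntegrable (fun x => 2*p * z x ^ (2*p-1) * (g x + ε)) MeasureTheory.volume 0 s :=
        (((continuous_const.mul ((Real.continuous_rpow_const hq).comp hzcont)).mul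
          (hg_cont.add continuous_const))).intervalIntegrable 0 s
      have := intervalIntegral.integral_eq_sub_of_hasDerivAt hderiv hint
      rw [this, hz0]; ring
    -- comparison: v s < z s on [0, T]
    have hcomp : ∀ s ∈ Set.Icc (0:ℝ) T, v s < z s := by
      by_contra hcon
      push_neg at hcon
      obtain ⟨s0, hs0, hs0le⟩ := hcon
      set S : Set ℝ := Set.Icc (0:ℝ) T ∩ {s | z s ≤ v s} with hSdef
      have hSclosed : IsClosed S := isClosed_Icc.inter (isClosed_le hzcont hv_cont)
      have hSne : S.Nonempty := ⟨s0, hs0, hs0le⟩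
      have hSbdd : BddBelow S := ⟨0, fun x hx => hx.1.1⟩
      set t0 := sInf S with ht0def
      have ht0mem : t0 ∈ S := hSclosed.csInf_mem hSne hSbdd
      have ht0Icc : t0 ∈ Set.Icc (0:ℝ) T := ht0mem.1
      have ht0le : z t0 ≤ v t0 := ht0mem.2
      have ht0pos : 0 < t0 := by
        rcases lt_or_eq_of_le ht0Icc.1 with h | h
        · exact h
        · exfalso
          rw [← h] at ht0le
          rw [hz0] at ht0le; linarith
      -- v u < z u for u ∈ [0, t0)
      have hlt : ∀ u, 0 ≤ u → u < t0 → v u < z u := by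
        intro u hu hut0
        by_contra hcon2
        push_neg at hcon2
        have : u ∈ S := ⟨⟨hu, le_trans (le_of_lt hut0) ht0Icc.2⟩, hcon2⟩
        exact absurd (csInf_le hSbdd this) (not_le.2 hut0)
      -- by continuity, v t0 ≤ z t0
      have hle_t0 : v t0 ≤ z t0 := by
        have hne : (nhdsWithin t0 (Set.Iio t0)).NeBot := nhdsLT_neBot t0
        have htend : Filter.Tendsto (fun u => z u - v u) (nhdsWithin t0 (Set.Iio t0))
            (nhds (z t0 - v t0)) :=
          ((hzcont.sub hv_cont).continuousAt).continuousWithinAt.tendsto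
        have hev : ∀ᶠ u in nhdsWithin t0 (Set.Iio t0), 0 ≤ z u - v u := by
          filter_upwards [Ioo_mem_nhdsLT_of_mem (Set.mem_Ioc.2 ⟨ht0pos, le_rfl⟩)] with u hu
          have := hlt u (le_of_lt hu.1) hu.2
          linarith
        have := ge_of_tendsto htend hev
        linarith
      have hvz : ∀ u ∈ Set.Icc (0:ℝ) t0, v u ≤ z u := by
        intro u hu
        rcases lt_or_eq_of_le hu.2 with h | h
        · exact le_of_lt (hlt u hu.1 h)
        · rw [h]; exact hle_t0
      have heq : v t0 = z t0 := le_antisymm hle_t0 ht0le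
      -- integral comparison
      have hmono : (∫ u in (0:ℝ)..t0, 2*p * v u ^ (2*p-1) * g u)
          ≤ ∫ u in (0:ℝ)..t0, 2*p * z u ^ (2*p-1) * (g u + ε) := by
        apply intervalIntegral.integral_mono_on (le_of_lt ht0pos)
        · exact (((continuous_const.mul ((Real.continuous_rpow_const hq).comp hv_cont)).mul
            hg_cont)).intervalIntegrable 0 t0
        · exact (((continuous_const.mul ((Real.continuous_rpow_const hq).comp hzcont)).mul
            (hg_cont.add continuous_const))).intervalIntegrable 0 t0
        · intro x hx
          have hx0 : 0 ≤ x := hx.1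
          have hxv : 0 ≤ v x := hv_nn x hx0
          have h1 : v x ^ (2*p-1) ≤ z x ^ (2*p-1) :=
            Real.rpow_le_rpow hxv (hvz x hx) hq
          have h2 : g x ≤ g x + ε := by linarith
          have hgx : 0 ≤ g x := hg_nn x hx0
          have hvq : 0 ≤ v x ^ (2*p-1) := Real.rpow_nonneg hxv _
          have hzq : 0 ≤ z x ^ (2*p-1) := le_trans hvq h1
          nlinarith [mul_le_mul h1 h2 hgx hzq]
      have hstrict : v 0 ^ (2*p) < (v 0 + ε) ^ (2*p) :=
        Real.rpow_lt_rpow hv0 (by linarith) h2ppos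
      have hchain : v t0 ^ (2*p) < z t0 ^ (2*p) := by
        calc v t0 ^ (2*p) ≤ v 0 ^ (2*p) + ∫ u in (0:ℝ)..t0, 2*p * v u ^ (2*p-1) * g u :=
              hineq t0 (le_of_lt ht0pos) ht0Icc.2
          _ ≤ v 0 ^ (2*p) + ∫ u in (0:ℝ)..t0, 2*p * z u ^ (2*p-1) * (g u + ε) := by linarith
          _ < (v 0 + ε) ^ (2*p) + ∫ u in (0:ℝ)..t0, 2*p * z u ^ (2*p-1) * (g u + ε) := by
              linarith
          _ = z t0 ^ (2*p) := (hzFTC t0).symm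
      rw [heq] at hchain
      exact lt_irrefl _ hchain
    have := hcomp t ⟨ht, htT⟩
    have hεt : ε * t ≤ ε * T := mul_le_mul_of_nonneg_left htT (le_of_lt hε)
    simp only [hzdef] at this
    linarith
  apply le_of_forall_pos_le_add
  intro δ hδ
  have h1T : (0:ℝ) < 1 + T := by linarith
  have := key (δ / (1 + T)) (div_pos hδ h1T)
  have h2 : δ / (1 + T) * (1 + T) = δ := div_mul_cancel₀ δ (ne_of_gt h1T)
  linarith
end
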